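/- arXiv:2504.00522 — 3 statements merged into one kernel-verified Lean document; each statement's English description precedes it below -/
import Mathlib

section
/- Upper bound of higher-order hyperedges: for any distinct vertices u and v, the number of hyperedges of H of size at least 3 that contain both u and v (counted with multiplicity) is at most MHH(u,v) := Σ_{z ∈ N(u) ∩ N(v)} min(ω_{u,z}, ω_{v,z}). -/
variable {V : Type*} [DecidableEq V] [Fintype V]

/-- Projected multiplicity: number of hyperedges containing both `u` and `v`. -/
def omegaM (H : Multiset (Finset V)) (u v : V) : ℕ :=
  (H.filter (fun e => u ∈ e ∧ v ∈ e)).card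

/-- Neighborhood in the projected graph. -/
def nbr (H : Multiset (Finset V)) (u : V) : Finset V :=
  Finset.univ.filter (fun y => y ≠ u ∧ 0 < omegaM H u y)

/-- Maximum number of higher-order hyperedges. -/
def MHH (H : Multiset (Finset V)) (u v : V) : ℕ :=
  ∑ z ∈ nbr H u ∩ nbr H v, min (omegaM H u z) (omegaM H v z)

lemma card_le_sum_classify {α β : Type*} [DecidableEq β] (S : Multiset α) (T : Finset β)
    (f : α → β) (hf : ∀ a ∈ S, f a ∈ T) :
    S.card ≤ ∑ z ∈ T, (S.filter (fun a => f a = z)).card := by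
  induction S using Multiset.induction with
  | empty => simp
  | cons a S ih =>
    have haT : f a ∈ T := hf a (Multiset.mem_cons_self a S)
    have ih' := ih (fun b hb => hf b (Multiset.mem_cons_of_mem hb))
    have hsum : ∑ z ∈ T, ((a ::ₘ S).filter (fun b => f b = z)).card
        = ∑ z ∈ T, ((S.filter (fun b => f b = z)).card + if f a = z then 1 else 0) := by
      refine Finset.sum_congr rfl fun z _ => ?_
      by_cases h : f a = z <;> simp [Multiset.filter_cons, h]
    rw [hsum, Finset.sum_add_distrib, Finset.sum_ite_eq T (f a) (fun _ => 1)]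
    simp only [haT, if_pos, Multiset.card_cons]
    omega

theorem higher_order_count_le_MHH (H : Multiset (Finset V))
    (hH : ∀ e ∈ H, 2 ≤ e.card) (u v : V) (huv : u ≠ v) :
    (H.filter (fun e => u ∈ e ∧ v ∈ e ∧ 3 ≤ e.card)).card ≤ MHH H u v := by
  classical
  set S := H.filter (fun e => u ∈ e ∧ v ∈ e ∧ 3 ≤ e.card) with hS
  set f : Finset V → V := fun e =>
    if h : (e \ {u, v}).Nonempty then h.choose else u with hf
  have hkey : ∀ e, (u ∈ e ∧ v ∈ e ∧ 3 ≤ e.card) → f e ∈ e ∧ f e ≠ u ∧ f e ≠ v := by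
    intro e he
    obtain ⟨hu, hv, hc⟩ := he
    have hne : (e \ {u, v}).Nonempty := by
      rw [← Finset.card_pos]
      have h2 : ({u, v} : Finset V).card ≤ 2 := Finset.card_le_two
      have := Finset.le_card_sdiff ({u, v} : Finset V) e
      omega
    have hmem : f e ∈ e \ {u, v} := by
      rw [hf]; simp only [hne, dif_pos]; exact hne.choose_spec
    rw [Finset.mem_sdiff, Finset.mem_insert, Finset.mem_singleton] at hmem
    exact ⟨hmem.1, fun h => hmem.2 (Or.inl h), fun h => hmem.2 (Or.inr h)⟩
  have hmemnbr : ∀ e ∈ S, f e ∈ nbr H u ∩ nbr H v := by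
    intro e he
    rw [hS, Multiset.mem_filter] at he
    obtain ⟨heH, hcond⟩ := he
    obtain ⟨hfe, hfu, hfv⟩ := hkey e hcond
    have h1 : 0 < omegaM H u (f e) := by
      rw [omegaM]
      exact Multiset.card_pos_iff_exists_mem.mpr
        ⟨e, Multiset.mem_filter.mpr ⟨heH, hcond.1, hfe⟩⟩
    have h2 : 0 < omegaM H v (f e) := by
      rw [omegaM]
      exact Multiset.card_pos_iff_exists_mem.mpr
        ⟨e, Multiset.mem_filter.mpr ⟨heH, hcond.2.1, hfe⟩⟩
    simp only [nbr, Finset.mem_inter, Finset.mem_filter, Finset.mem_univ, true_and]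
    exact ⟨⟨hfu, h1⟩, ⟨hfv, h2⟩⟩
  refine le_trans (card_le_sum_classify S (nbr H u ∩ nbr H v) f hmemnbr) ?_
  rw [MHH]
  refine Finset.sum_le_sum fun z hz => ?_
  have key : ∀ (w : V), (∀ e : Finset V, (u ∈ e ∧ v ∈ e ∧ 3 ≤ e.card) → w ∈ e) →
      (S.filter (fun e => f e = z)).card ≤ omegaM H w z := by
    intro w hw
    rw [omegaM]
    refine Multiset.card_le_card (Multiset.le_iff_count.mpr fun e => ?_)
    rw [Multiset.count_filter, hS, Multiset.count_filter, Multiset.count_filter]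
    split_ifs with h1 h2 h3
    · exact le_refl _
    · rcases Nat.eq_zero_or_pos (H.count e) with h0 | hp
      · omega
      · exact absurd ⟨hw e h2, h1 ▸ (hkey e h2).1⟩ h3
    all_goals exact Nat.zero_le _
  rw [le_min_iff]
  exact ⟨key u (fun e he => he.1), key v (fun e he => he.2.1)⟩
end

section
/- Lower bound on size-2 hyperedges: for any distinct vertices u and v, the residual r_{u,v} := ω_{u,v} − MHH(u,v) is a lower bound on the number of hyperedges of H (counted with multiplicity) that are exactly equal to {u,v}. In particular, if r_{u,v} > 0 then {u,v} occurs as a hyperedge of H. -/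
variable {V : Type*} [DecidableEq V] [Fintype V]

/-- A witness third vertex of a hyperedge. -/
noncomputable def wit (u v : V) (e : Finset V) : V :=
  if h : (e \ {u, v}).Nonempty then h.choose else u

lemma wit_spec {u v : V} {e : Finset V} (hu : u ∈ e) (hv : v ∈ e)
    (hne : e ≠ ({u, v} : Finset V)) :
    wit u v e ∈ e ∧ wit u v e ≠ u ∧ wit u v e ≠ v := by
  have h : (e \ ({u, v} : Finset V)).Nonempty := by
    rw [Finset.sdiff_nonempty]
    intro hsub
    apply hne
    apply le_antisymm hsub
    intro x hx
    simp only [Finset.mem_insert, Finset.mem_singleton] at hx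
    rcases hx with rfl | rfl <;> assumption
  rw [wit, dif_pos h]
  have hc := h.choose_spec
  simp only [Finset.mem_sdiff, Finset.mem_insert, Finset.mem_singleton] at hc
  exact ⟨hc.1, fun h' => hc.2 (Or.inl h'), fun h' => hc.2 (Or.inr h')⟩

lemma fiber_le_omegaM (H : Multiset (Finset V)) (u v w z : V)
    (hw : w = u ∨ w = v) :
    ((H.filter (fun e => (u ∈ e ∧ v ∈ e) ∧ e ≠ ({u, v} : Finset V))).filter
      (fun e => wit u v e = z)).card ≤ omegaM H w z := by
  rw [omegaM, Multiset.filter_filter]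
  apply Multiset.card_le_card
  apply Multiset.monotone_filter_right
  rintro e ⟨hwit, ⟨hu, hv⟩, hne⟩
  obtain ⟨hmem, -, -⟩ := wit_spec hu hv hne
  refine ⟨?_, hwit ▸ hmem⟩
  rcases hw with rfl | rfl <;> assumption

lemma big_le_MHH (H : Multiset (Finset V)) (u v : V) :
    (H.filter (fun e => (u ∈ e ∧ v ∈ e) ∧ e ≠ ({u, v} : Finset V))).card ≤ MHH H u v := by
  classical
  set big := H.filter (fun e => (u ∈ e ∧ v ∈ e) ∧ e ≠ ({u, v} : Finset V)) with hbig
  have hcard : big.card = ∑ z ∈ Finset.univ,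
      (big.filter (fun e => wit u v e = z)).card := by
    calc big.card = (big.map (wit u v)).card := (Multiset.card_map _ _).symm
      _ = ∑ z ∈ (big.map (wit u v)).toFinset, (big.map (wit u v)).count z :=
          (Multiset.toFinset_sum_count_eq _).symm
      _ = ∑ z ∈ Finset.univ, (big.map (wit u v)).count z := by
          refine Finset.sum_subset (Finset.subset_univ _) ?_
          intro z _ hz
          exact Multiset.count_eq_zero.mpr (fun h => hz (Multiset.mem_toFinset.mpr h))
      _ = ∑ z ∈ Finset.univ, (big.filter (fun e => wit u v e = z)).card := by
          refine Finset.sum_congr rfl fun z _ => ?_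
          rw [Multiset.count_map]
          congr 1
          exact Multiset.filter_congr fun e _ => ⟨Eq.symm, Eq.symm⟩
  have key : ∀ z : V, (big.filter (fun e => wit u v e = z)).card ≤
      if z ∈ nbr H u ∩ nbr H v then min (omegaM H u z) (omegaM H v z) else 0 := by
    intro z
    rcases Nat.eq_zero_or_pos (big.filter (fun e => wit u v e = z)).card with h0 | hpos
    · rw [h0]; exact Nat.zero_le _
    · obtain ⟨e, he⟩ := Multiset.card_pos_iff_exists_mem.mp hpos
      rw [Multiset.mem_filter] at he
      obtain ⟨hebig, hz⟩ := he
      rw [hbig, Multiset.mem_filter] at hebig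
      obtain ⟨heH, ⟨hu, hv⟩, hne⟩ := hebig
      obtain ⟨hwm, hwu, hwv⟩ := wit_spec hu hv hne
      rw [hz] at hwm hwu hwv
      have hzS : z ∈ nbr H u ∩ nbr H v := by
        rw [Finset.mem_inter, nbr, nbr, Finset.mem_filter, Finset.mem_filter]
        refine ⟨⟨Finset.mem_univ _, hwu, ?_⟩, Finset.mem_univ _, hwv, ?_⟩ <;>
        · rw [omegaM]
          apply Multiset.card_pos_iff_exists_mem.mpr
          exact ⟨e, Multiset.mem_filter.mpr ⟨heH, by constructor <;> assumption⟩⟩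
      rw [if_pos hzS]
      exact le_min (fiber_le_omegaM H u v u z (Or.inl rfl))
        (fiber_le_omegaM H u v v z (Or.inr rfl))
  calc big.card = _ := hcard
    _ ≤ ∑ z ∈ Finset.univ,
        (if z ∈ nbr H u ∩ nbr H v then min (omegaM H u z) (omegaM H v z) else 0) :=
        Finset.sum_le_sum fun z _ => key z
    _ = MHH H u v := by
        rw [MHH, Finset.sum_ite_mem, Finset.univ_inter]

theorem residual_le_pair_count (H : Multiset (Finset V))
    (hH : ∀ e ∈ H, 2 ≤ e.card) (u v : V) (huv : u ≠ v) :
    omegaM H u v - MHH H u v ≤ (H.filter (fun e => e = ({u, v} : Finset V))).card ∧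
    (0 < omegaM H u v - MHH H u v → ({u, v} : Finset V) ∈ H) := by
  classical
  have hsplit : omegaM H u v = (H.filter (fun e => e = ({u, v} : Finset V))).card +
      (H.filter (fun e => (u ∈ e ∧ v ∈ e) ∧ e ≠ ({u, v} : Finset V))).card := by
    rw [omegaM, ← Multiset.card_add]
    congr 1
    have h1 : (H.filter (fun e => e = ({u, v} : Finset V))) =
        (H.filter (fun e => u ∈ e ∧ v ∈ e)).filter (fun e => e = ({u, v} : Finset V)) := by
      rw [Multiset.filter_filter]
      apply Multiset.filter_congr
      rintro e - 
      constructor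
      · rintro rfl
        exact ⟨rfl, by simp, by simp⟩
      · exact fun h => h.1
    have h2 : (H.filter (fun e => (u ∈ e ∧ v ∈ e) ∧ e ≠ ({u, v} : Finset V))) =
        (H.filter (fun e => u ∈ e ∧ v ∈ e)).filter (fun e => ¬ e = ({u, v} : Finset V)) := by
      rw [Multiset.filter_filter]
      apply Multiset.filter_congr
      rintro e -
      constructor
      · exact fun h => ⟨h.2, h.1⟩
      · exact fun h => ⟨h.2, h.1⟩
    rw [h1, h2, Multiset.filter_add_not]
  have hbig := big_le_MHH H u v
  constructor
  · omega
  · intro hpos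
    have hp : 0 < (H.filter (fun e => e = ({u, v} : Finset V))).card := by omega
    obtain ⟨e, he⟩ := Multiset.card_pos_iff_exists_mem.mp hp
    rw [Multiset.mem_filter] at he
    rw [← he.2]; exact he.1
end

section
/- In the Filtering step, the quantity removed is sound: for every edge (u,v) of the projected graph, with r_{u,v} = max(ω_{u,v} − MHH(u,v), 0) copies of {u,v} added to the reconstructed hypergraph, we have r_{u,v} ≤ (number of hyperedges of H equal to {u,v}), so the multiset of size-2 hyperedges output by Filtering is a sub-multiset of the true hyperedges of H. -/
variable {V : Type*} [DecidableEq V] [Fintype V]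

private lemma card_le_sum_filter {α β : Type*} [DecidableEq β] (s : Multiset α)
    (T : Finset β) (p : β → α → Prop) [∀ z, DecidablePred (p z)]
    (h : ∀ a ∈ s, ∃ z ∈ T, p z a) :
    s.card ≤ ∑ z ∈ T, (s.filter (p z)).card := by
  induction s using Multiset.induction with
  | empty => simp
  | cons a s ih =>
    have ha : ∃ z ∈ T, p z a := h a (Multiset.mem_cons_self a s)
    obtain ⟨z0, hz0T, hz0⟩ := ha
    have hs := ih (fun b hb => h b (Multiset.mem_cons_of_mem hb))
    have hsum : ∀ z, (Multiset.filter (p z) (a ::ₘ s)).card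
        = (if p z a then 1 else 0) + (s.filter (p z)).card := by
      intro z
      by_cases hpz : p z a <;> simp [Multiset.filter_cons, hpz] <;> omega
    simp only [Multiset.card_cons, hsum, Finset.sum_add_distrib]
    have h1 : 1 ≤ ∑ z ∈ T, (if p z a then 1 else 0) :=
      Finset.single_le_sum (f := fun z => if p z a then 1 else 0)
        (fun _ _ => Nat.zero_le _) hz0T |>.trans_eq' (by simp [hz0])
    omega

theorem filtering_sound (H : Multiset (Finset V))
    (hH : ∀ e ∈ H, 2 ≤ e.card) (u v : V) (huv : u ≠ v) :
    max (omegaM H u v - MHH H u v) 0 ≤ H.count ({u, v} : Finset V) := by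
  rw [Nat.max_eq_left (Nat.zero_le _)]
  -- set S : hyperedges containing u,v but ≠ {u,v}
  set S : Multiset (Finset V) :=
    H.filter (fun e => (u ∈ e ∧ v ∈ e) ∧ e ≠ ({u, v} : Finset V)) with hS
  have hsplit : omegaM H u v = H.count ({u, v} : Finset V) + S.card := by
    have := Multiset.filter_add_not (fun e => e = ({u, v} : Finset V))
      (H.filter (fun e => u ∈ e ∧ v ∈ e))
    have hcard := congrArg Multiset.card this
    rw [Multiset.card_add] at hcard
    have h1 : (Multiset.filter (fun e => e = ({u, v} : Finset V))
        (H.filter (fun e => u ∈ e ∧ v ∈ e))) = H.filter (fun e => e = ({u, v} : Finset V)) := by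
      rw [Multiset.filter_filter]
      apply Multiset.filter_congr
      intro e _
      constructor
      · rintro ⟨h, _⟩; exact h
      · rintro rfl; simp
    have h2 : (Multiset.filter (fun e => ¬ e = ({u, v} : Finset V))
        (H.filter (fun e => u ∈ e ∧ v ∈ e))) = S := by
      rw [hS, Multiset.filter_filter]
      apply Multiset.filter_congr
      intro e _
      tauto
    rw [h1, h2] at hcard
    rw [omegaM, ← hcard, Multiset.count_eq_card_filter_eq]
    simp only [eq_comm]
  have hSle : S.card ≤ MHH H u v := by
    rw [MHH]
    refine le_trans (card_le_sum_filter S (nbr H u ∩ nbr H v) (fun z e => z ∈ e) ?_) ?_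
    case refine_2 =>
      apply Finset.sum_le_sum
      intro z hz
      apply le_min
      · have : S.filter (fun e => z ∈ e) ≤ H.filter (fun e => u ∈ e ∧ z ∈ e) := by
          rw [hS, Multiset.filter_filter]
          exact Multiset.monotone_filter_right H (fun e he => ⟨he.2.1.1, he.1⟩)
        exact Multiset.card_le_card this
      · have : S.filter (fun e => z ∈ e) ≤ H.filter (fun e => v ∈ e ∧ z ∈ e) := by
          rw [hS, Multiset.filter_filter]
          exact Multiset.monotone_filter_right H (fun e he => ⟨he.2.1.2, he.1⟩)
        exact Multiset.card_le_card this
    case refine_1 =>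
      intro e he
      rw [hS, Multiset.mem_filter] at he
      obtain ⟨heH, ⟨hu, hv⟩, hne⟩ := he
      have hsub : ({u, v} : Finset V) ⊆ e := by
        intro x hx
        simp only [Finset.mem_insert, Finset.mem_singleton] at hx
        rcases hx with rfl | rfl <;> assumption
      obtain ⟨z, hze, hznot⟩ := Finset.exists_of_ssubset (hsub.ssubset_of_ne (Ne.symm hne))
      refine ⟨z, ?_, hze⟩
      simp only [Finset.mem_insert, Finset.mem_singleton, not_or] at hznot
      obtain ⟨hzu, hzv⟩ := hznot
      have hwu : 0 < omegaM H u z := by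
        rw [omegaM, Multiset.card_pos_iff_exists_mem]
        exact ⟨e, Multiset.mem_filter.2 ⟨heH, hu, hze⟩⟩
      have hwv : 0 < omegaM H v z := by
        rw [omegaM, Multiset.card_pos_iff_exists_mem]
        exact ⟨e, Multiset.mem_filter.2 ⟨heH, hv, hze⟩⟩
      simp only [Finset.mem_inter, nbr, Finset.mem_filter, Finset.mem_univ, true_and]
      exact ⟨⟨hzu, hwu⟩, ⟨hzv, hwv⟩⟩
  omega
end
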